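/- arXiv:2410.10387 — 2 statements merged into one kernel-verified Lean document; each statement's English description precedes it below -/
import Mathlib

section
/- Suppose for vectors x, y, z (of appropriate dimensions) we have componentwise bounds L₁ y + c₁ ≤ x ≤ U₁ y + d₁ and L₂ z + c₂ ≤ y ≤ U₂ z + d₂. Then x satisfies the composed linear bound ((L₁)_+ L₂ + (L₁)_- U₂) z + (L₁)_+ c₂ + (L₁)_- d₂ + c₁ ≤ x ≤ ((U₁)_+ U₂ + (U₁)_- L₂) z + (U₁)_+ d₂ + (U₁)_- c₂ + d₁, where (·)_+ and (·)_- denote entrywise positive and negative parts of matrices. -/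
open Matrix

/-- Entrywise positive part of a matrix. -/
def matPos {ι κ : Type*} (W : Matrix ι κ ℝ) : Matrix ι κ ℝ :=
  Matrix.of fun i j => max (W i j) 0

/-- Entrywise negative part of a matrix. -/
def matNeg {ι κ : Type*} (W : Matrix ι κ ℝ) : Matrix ι κ ℝ :=
  Matrix.of fun i j => min (W i j) 0

lemma aux_lb (w a b t : ℝ) (ha : a ≤ t) (hb : t ≤ b) :
    max w 0 * a + min w 0 * b ≤ w * t := by
  rcases le_total w 0 with h | h
  · simp only [max_eq_right h, min_eq_left h]; nlinarith
  · simp only [max_eq_left h, min_eq_right h]; nlinarith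

lemma aux_ub (w a b t : ℝ) (ha : a ≤ t) (hb : t ≤ b) :
    w * t ≤ max w 0 * b + min w 0 * a := by
  rcases le_total w 0 with h | h
  · simp only [max_eq_right h, min_eq_left h]; nlinarith
  · simp only [max_eq_left h, min_eq_right h]; nlinarith

/-- Composition of symbolic linear bounds. -/
theorem compose_linear_bounds {m k n : ℕ}
    (L₁ U₁ : Matrix (Fin m) (Fin k) ℝ) (c₁ d₁ : Fin m → ℝ)
    (L₂ U₂ : Matrix (Fin k) (Fin n) ℝ) (c₂ d₂ : Fin k → ℝ)
    (x : Fin m → ℝ) (y : Fin k → ℝ) (z : Fin n → ℝ)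
    (h1l : L₁.mulVec y + c₁ ≤ x) (h1u : x ≤ U₁.mulVec y + d₁)
    (h2l : L₂.mulVec z + c₂ ≤ y) (h2u : y ≤ U₂.mulVec z + d₂) :
    ((matPos L₁) * L₂ + (matNeg L₁) * U₂).mulVec z
        + ((matPos L₁).mulVec c₂
            + (matNeg L₁).mulVec d₂ + c₁) ≤ x ∧
    x ≤ ((matPos U₁) * U₂ + (matNeg U₁) * L₂).mulVec z
        + ((matPos U₁).mulVec d₂
            + (matNeg U₁).mulVec c₂ + d₁) := by
  constructor
  · intro i
    have key : ∀ j ∈ Finset.univ,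
        max (L₁ i j) 0 * (L₂.mulVec z + c₂) j + min (L₁ i j) 0 * (U₂.mulVec z + d₂) j
          ≤ L₁ i j * y j := fun j _ => aux_lb _ _ _ _ (h2l j) (h2u j)
    have hsum := Finset.sum_le_sum key
    have h1 := h1l i
    simp only [Pi.add_apply, Matrix.add_mulVec, mulVec, dotProduct, Matrix.mul_apply,
      matPos, matNeg, Matrix.of_apply, Pi.add_apply] at h1 hsum ⊢
    simp only [Finset.sum_add_distrib, mul_add, Finset.mul_sum, Finset.sum_mul] at hsum ⊢
    rw [Finset.sum_comm (γ := Fin n)]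
    rw [Finset.sum_comm (γ := Fin n)]
    simp only [mul_assoc] at *
    linarith
  · intro i
    have key : ∀ j ∈ Finset.univ,
        U₁ i j * y j ≤
          max (U₁ i j) 0 * (U₂.mulVec z + d₂) j + min (U₁ i j) 0 * (L₂.mulVec z + c₂) j
          := fun j _ => aux_ub _ _ _ _ (h2l j) (h2u j)
    have hsum := Finset.sum_le_sum key
    have h1 := h1u i
    simp only [Pi.add_apply, Matrix.add_mulVec, mulVec, dotProduct, Matrix.mul_apply,
      matPos, matNeg, Matrix.of_apply, Pi.add_apply] at h1 hsum ⊢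
    simp only [Finset.sum_add_distrib, mul_add, Finset.mul_sum, Finset.sum_mul] at hsum ⊢
    rw [Finset.sum_comm (γ := Fin n)]
    rw [Finset.sum_comm (γ := Fin n)]
    simp only [mul_assoc] at *
    linarith
end

section
/- Induction step of multi-step symbolic bounds: assume (i) x_k is linearly bounded in terms of (x_{k-n}, u_{k-n}, …, u_{k-1}): L_n [x_{k-n}; u_{k-n}; …; u_{k-1}] + c_n ≤ x_k ≤ U_n [x_{k-n}; …; u_{k-1}] + d_n componentwise, and (ii) x_{k-n} is linearly bounded in terms of (x_{k-n-1}, u_{k-n-1}): L' [x_{k-n-1}; u_{k-n-1}] + c' ≤ x_{k-n} ≤ U' [x_{k-n-1}; u_{k-n-1}] + d'. Then x_k is linearly bounded in terms of (x_{k-n-1}, u_{k-n-1}, …, u_{k-1}) with lower weight matrix (L_n)_+ · blockdiag(L', I) + (L_n)_- · blockdiag(U', I), lower bias c_n + (L_n)_+ [c'; 0] + (L_n)_- [d'; 0], and symmetrically for the upper bound with (U_n)_+ · blockdiag(U', I) + (U_n)_- · blockdiag(L', I) and bias d_n + (U_n)_+ [d'; 0] + (U_n)_- [c'; 0]. -/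
open Matrix

/-! Substituting the one-step bound on `x_{k-n}` into the `n`-step bound is interval arithmetic:
over the box `lo ≤ y ≤ hi`, a row of `L_n` applied to `y` is smallest when its nonnegative entries
meet `lo` and its nonpositive entries meet `hi`, i.e. `(L_n)_+ lo + (L_n)_- hi ≤ L_n y`. The
controls are unconstrained by the one-step bound, so `lo` and `hi` carry them through unchanged,
which is what the identity blocks of `blockdiag(L', I)` encode. -/

section Monotone

variable {ι κ α : Type*} [Fintype κ]

theorem Matrix.mulVec_le_mulVec_of_nonneg [Semiring α] [PartialOrder α] [IsOrderedRing α]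
    {W : Matrix ι κ α} (hW : ∀ i j, 0 ≤ W i j) {x y : κ → α} (hxy : x ≤ y) :
    W *ᵥ x ≤ W *ᵥ y := fun i =>
  Finset.sum_le_sum fun j _ => mul_le_mul_of_nonneg_left (hxy j) (hW i j)

theorem Matrix.mulVec_le_mulVec_of_nonpos [Ring α] [PartialOrder α] [IsOrderedRing α]
    {W : Matrix ι κ α} (hW : ∀ i j, W i j ≤ 0) {x y : κ → α} (hxy : x ≤ y) :
    W *ᵥ y ≤ W *ᵥ x := fun i =>
  Finset.sum_le_sum fun j _ => mul_le_mul_of_nonpos_left (hxy j) (hW i j)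

end Monotone

section PosNegParts

variable {ι κ : Type*} (W : Matrix ι κ ℝ)

theorem matPos_add_matNeg : matPos W + matNeg W = W := by
  ext i j
  simp [matPos, matNeg]

theorem matPos_nonneg (i : ι) (j : κ) : 0 ≤ matPos W i j := le_max_right _ _

theorem matNeg_nonpos (i : ι) (j : κ) : matNeg W i j ≤ 0 := min_le_right _ _

variable [Fintype κ] {a y b : κ → ℝ}

theorem matPos_mulVec_add_matNeg_mulVec_le (ha : a ≤ y) (hb : y ≤ b) :
    matPos W *ᵥ a + matNeg W *ᵥ b ≤ W *ᵥ y :=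
  calc matPos W *ᵥ a + matNeg W *ᵥ b ≤ matPos W *ᵥ y + matNeg W *ᵥ y :=
        add_le_add (mulVec_le_mulVec_of_nonneg (matPos_nonneg W) ha)
          (mulVec_le_mulVec_of_nonpos (matNeg_nonpos W) hb)
    _ = W *ᵥ y := by rw [← add_mulVec, matPos_add_matNeg]

theorem le_matPos_mulVec_add_matNeg_mulVec (ha : a ≤ y) (hb : y ≤ b) :
    W *ᵥ y ≤ matPos W *ᵥ b + matNeg W *ᵥ a :=
  calc W *ᵥ y = matPos W *ᵥ y + matNeg W *ᵥ y := by rw [← add_mulVec, matPos_add_matNeg]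
    _ ≤ matPos W *ᵥ b + matNeg W *ᵥ a :=
        add_le_add (mulVec_le_mulVec_of_nonneg (matPos_nonneg W) hb)
          (mulVec_le_mulVec_of_nonpos (matNeg_nonpos W) ha)

end PosNegParts

theorem Matrix.mul_fromBlocks_one_mulVec_add {ι κ μ ν α : Type*} [Fintype κ] [Fintype μ]
    [Fintype ν] [DecidableEq μ] [CommRing α]
    (W : Matrix ι (κ ⊕ μ) α) (A : Matrix κ ν α) (v : ν → α) (u : μ → α) (c : κ → α) :
    (W * fromBlocks A 0 0 1) *ᵥ Sum.elim v u + W *ᵥ Sum.elim c 0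
      = W *ᵥ Sum.elim (A *ᵥ v + c) u := by
  -- `*` elaborates through the `CStarMatrix` instance, so `mulVec_mulVec` only applies up to defeq.
  have hassoc : (W * fromBlocks A 0 0 1) *ᵥ Sum.elim v u
      = W *ᵥ (fromBlocks A 0 0 1 *ᵥ Sum.elim v u) := (mulVec_mulVec _ _ _).symm
  rw [hassoc, ← mulVec_add, fromBlocks_mulVec]
  congr 1
  ext (k | k) <;> simp

theorem Matrix.mul_fromBlocks_one_add_mul_fromBlocks_one_mulVec_add {ι κ μ ν α : Type*}
    [Fintype κ] [Fintype μ] [Fintype ν] [DecidableEq μ] [CommRing α]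
    (P N : Matrix ι (κ ⊕ μ) α) (A B : Matrix κ ν α) (v : ν → α) (u : μ → α)
    (c : ι → α) (a b : κ → α) :
    (P * fromBlocks A 0 0 1 + N * fromBlocks B 0 0 1) *ᵥ Sum.elim v u
        + (c + P *ᵥ Sum.elim a 0 + N *ᵥ Sum.elim b 0)
      = P *ᵥ Sum.elim (A *ᵥ v + a) u + N *ᵥ Sum.elim (B *ᵥ v + b) u + c := by
  have hdistrib : (P * fromBlocks A 0 0 1 + N * fromBlocks B 0 0 1) *ᵥ Sum.elim v u
      = (P * fromBlocks A 0 0 1) *ᵥ Sum.elim v u + (N * fromBlocks B 0 0 1) *ᵥ Sum.elim v u :=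
    add_mulVec _ _ _
  rw [hdistrib, ← mul_fromBlocks_one_mulVec_add, ← mul_fromBlocks_one_mulVec_add]
  abel

/-- Induction step of the multi-step symbolic bounds (Theorem 1 recursion):
composing the `n`-step bound on `x_k` in terms of `(x_{k−n}, u_{k−n}, …, u_{k−1})`
with the one-step bound on `x_{k−n}` in terms of `(x_{k−n−1}, u_{k−n−1})`. -/
theorem multistep_symbolic_bound_step {m p q r : ℕ}
    (Ln Un : Matrix (Fin m) (Fin p ⊕ Fin q) ℝ) (cn dn : Fin m → ℝ)
    (L' U' : Matrix (Fin p) (Fin r) ℝ) (c' d' : Fin p → ℝ)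
    (xk : Fin m → ℝ) (xkn : Fin p → ℝ) (uvec : Fin q → ℝ) (v : Fin r → ℝ)
    (h1l : Ln.mulVec (Sum.elim xkn uvec) + cn ≤ xk)
    (h1u : xk ≤ Un.mulVec (Sum.elim xkn uvec) + dn)
    (h2l : L'.mulVec v + c' ≤ xkn)
    (h2u : xkn ≤ U'.mulVec v + d') :
    ((matPos Ln) * Matrix.fromBlocks L' 0 0 1
        + (matNeg Ln) * Matrix.fromBlocks U' 0 0 1).mulVec
          (Sum.elim v uvec)
      + (cn + (matPos Ln).mulVec (Sum.elim c' 0)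
            + (matNeg Ln).mulVec (Sum.elim d' 0)) ≤ xk ∧
    xk ≤ ((matPos Un) * Matrix.fromBlocks U' 0 0 1
        + (matNeg Un) * Matrix.fromBlocks L' 0 0 1).mulVec
          (Sum.elim v uvec)
      + (dn + (matPos Un).mulVec (Sum.elim d' 0)
            + (matNeg Un).mulVec (Sum.elim c' 0)) := by
  set lo := Sum.elim (L' *ᵥ v + c') uvec
  set hi := Sum.elim (U' *ᵥ v + d') uvec
  have hlo : lo ≤ Sum.elim xkn uvec := Sum.elim_le_elim_iff.2 ⟨h2l, le_rfl⟩
  have hhi : Sum.elim xkn uvec ≤ hi := Sum.elim_le_elim_iff.2 ⟨h2u, le_rfl⟩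
  constructor
  · calc _ = matPos Ln *ᵥ lo + matNeg Ln *ᵥ hi + cn :=
          mul_fromBlocks_one_add_mul_fromBlocks_one_mulVec_add ..
      _ ≤ Ln *ᵥ Sum.elim xkn uvec + cn :=
          add_le_add_left (matPos_mulVec_add_matNeg_mulVec_le Ln hlo hhi) cn
      _ ≤ xk := h1l
  · calc xk ≤ Un *ᵥ Sum.elim xkn uvec + dn := h1u
      _ ≤ matPos Un *ᵥ hi + matNeg Un *ᵥ lo + dn :=
          add_le_add_left (le_matPos_mulVec_add_matNeg_mulVec Un hlo hhi) dn
      _ = _ :=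
          (mul_fromBlocks_one_add_mul_fromBlocks_one_mulVec_add ..).symm
end
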